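/- For every natural number n ≥ 0, the Gaussian modified third-order Jacobsthal number satisfies the Binet formula Kg(n) = (1 + i/2)·2^n + (1 + i)·Ω(n) + (2 - i)·Ω(n+1). -/

import Mathlib

/-!
The characteristic polynomial of the recurrence is `X³ - X² - X - 2 = (X - 2)(X² + X + 1)`.
The root `2` gives the solution `2ⁿ`; the primitive cube roots of unity give the 3-periodic
solutions, which are spanned by `Ω(n)` and its shift `Ω(n + 1)` because `Ω` has zero sum over
each period. The Binet expression is therefore a solution, and it has the initial values of `Kg`.
-/

/-- Ω(n) = 0, 1, -1 according as n ≡ 0, 1, 2 (mod 3). -/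
def Omg (n : ℕ) : ℤ := if n % 3 = 0 then 0 else if n % 3 = 1 then 1 else -1

theorem Omg_add_three (n : ℕ) : Omg (n + 3) = Omg n := by
  simp only [Omg, Nat.add_mod_right]

theorem Omg_add_Omg_add_one_add_Omg_add_two (n : ℕ) :
    Omg n + Omg (n + 1) + Omg (n + 2) = 0 := by
  have : n % 3 = 0 ∨ n % 3 = 1 ∨ n % 3 = 2 := by omega
  rcases this with h | h | h <;> simp [Omg, Nat.add_mod, h]

namespace LinearRecurrence

theorem IsSolution.shift {R : Type*} [CommSemiring R] {E : LinearRecurrence R} {u : ℕ → R}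
    (hu : E.IsSolution u) : E.IsSolution fun n ↦ u (n + 1) := fun n ↦ by
  simpa only [add_right_comm] using hu (n + 1)

def modJacobsthal (R : Type*) [CommSemiring R] : LinearRecurrence R := ⟨3, ![2, 1, 1]⟩

section CommSemiring

variable {R : Type*} [CommSemiring R]

theorem modJacobsthal_isSolution_iff {u : ℕ → R} :
    (modJacobsthal R).IsSolution u ↔ ∀ n, u (n + 3) = u (n + 2) + u (n + 1) + 2 * u n := by
  refine forall_congr' fun n ↦ ?_
  change u (n + 3) = ∑ i : Fin 3, ![2, 1, 1] i * u (n + i) ↔ _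
  rw [Fin.sum_univ_three]
  simp only [Matrix.cons_val_zero, Matrix.cons_val_one, Matrix.cons_val_two, Fin.val_zero,
    Matrix.tail_cons, Matrix.head_cons, Fin.val_one, Fin.val_two, add_zero, one_mul]
  rw [show 2 * u n + u (n + 1) + u (n + 2) = u (n + 2) + u (n + 1) + 2 * u n by ring]

theorem modJacobsthal_isSolution_two_pow :
    (modJacobsthal R).IsSolution fun n ↦ (2 : R) ^ n :=
  modJacobsthal_isSolution_iff.2 fun n ↦ by ring

end CommSemiring

section CommRing

variable {R : Type*} [CommRing R]

theorem modJacobsthal_isSolution_Omg : (modJacobsthal R).IsSolution fun n ↦ (Omg n : R) :=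
  modJacobsthal_isSolution_iff.2 fun n ↦ by
    have hsum := congrArg (Int.cast : ℤ → R) (Omg_add_Omg_add_one_add_Omg_add_two n)
    push_cast at hsum
    rw [Omg_add_three]
    linear_combination -hsum

theorem modJacobsthal_isSolution_binet (a b c : R) :
    (modJacobsthal R).IsSolution fun n ↦ a * 2 ^ n + b * (Omg n : R) + c * (Omg (n + 1) : R) := by
  have hpow := (is_sol_iff_mem_solSpace _ _).1 (modJacobsthal_isSolution_two_pow (R := R))
  have hOmg := (is_sol_iff_mem_solSpace _ _).1 (modJacobsthal_isSolution_Omg (R := R))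
  have hOmg' := (is_sol_iff_mem_solSpace _ _).1 (modJacobsthal_isSolution_Omg (R := R)).shift
  exact (is_sol_iff_mem_solSpace _ _).2 <|
    add_mem (add_mem (Submodule.smul_mem _ a hpow) (Submodule.smul_mem _ b hOmg))
      (Submodule.smul_mem _ c hOmg')

end CommRing

end LinearRecurrence

open LinearRecurrence

theorem binet_gaussian_modified_third_order_jacobsthal
    (Kg : ℕ → ℂ)
    (h0 : Kg 0 = 3 - (1 / 2 : ℂ) * Complex.I)
    (h1 : Kg 1 = 1 + 3 * Complex.I)
    (h2 : Kg 2 = 3 + Complex.I)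
    (hrec : ∀ n : ℕ, Kg (n + 3) = Kg (n + 2) + Kg (n + 1) + 2 * Kg n) :
    ∀ n : ℕ,
      Kg n = (1 + Complex.I / 2) * 2 ^ n
        + (1 + Complex.I) * (Omg n : ℂ)
        + (2 - Complex.I) * (Omg (n + 1) : ℂ) := by
  have hKg : (modJacobsthal ℂ).IsSolution Kg := modJacobsthal_isSolution_iff.2 hrec
  refine congrFun (((modJacobsthal ℂ).eq_iff_eqOn_range_order _ _ hKg
    (modJacobsthal_isSolution_binet _ _ _)).2 ?_)
  intro n hn
  obtain rfl | rfl | rfl : n = 0 ∨ n = 1 ∨ n = 2 := by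
    simp only [modJacobsthal, Finset.coe_range, Set.mem_Iio] at hn
    omega
  all_goals norm_num [Omg, h0, h1, h2]; ring
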